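/- If a topological space X is a homotopy retract of a topological space Y (i.e., there exist maps i : X → Y and r : Y → X with r ∘ i homotopic to the identity on X), then TC(X) ≤ TC(Y), where TC denotes the reduced topological complexity (the minimal k such that X × X admits an open cover by k+1 sets, each admitting a continuous local section of the free path fibration p_X : X^I → X × X sending γ to (γ(0), γ(1))). -/

import Mathlib

open unitInterval in
/-- An open cover of `X × X` by `k+1` sets, each admitting a continuous local
section of the free path fibration `p_X : X^I → X × X`, `γ ↦ (γ 0, γ 1)`. -/
def tcCover (X : Type*) [TopologicalSpace X] (k : ℕ) : Prop :=
  ∃ U : Fin (k + 1) → Set (X × X),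
    (∀ i, IsOpen (U i)) ∧ (⋃ i, U i) = Set.univ ∧
    ∀ i, ∃ s : C(U i, C(unitInterval, X)),
      ∀ p : U i, s p 0 = (p : X × X).1 ∧ s p 1 = (p : X × X).2

/-- The reduced topological complexity of a space. -/
noncomputable def topComplexity (X : Type*) [TopologicalSpace X] : ℕ∞ :=
  sInf {n : ℕ∞ | ∃ k : ℕ, n = k ∧ tcCover X k}

/-!
A continuous section of the path fibration over `U ⊆ X × X` is the same thing as a
homotopy between the two projections `U → X`. Pulling such a section over `V ⊆ Y × Y` back
along `i × i` gives `i ∘ pr₁ ≃ i ∘ pr₂` on `(i × i)⁻¹ V`; composing with `r` and using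
`r ∘ i ≃ id` yields `pr₁ ≃ pr₂` there. Hence every cover witnessing `TC(Y) ≤ k` pulls back to one witnessing
`TC(X) ≤ k`.
-/

open unitInterval

theorem ContinuousMap.exists_path_family_iff_homotopic {Z X : Type*} [TopologicalSpace Z]
    [TopologicalSpace X] (f g : C(Z, X)) :
    (∃ s : C(Z, C(I, X)), ∀ z, s z 0 = f z ∧ s z 1 = g z) ↔ f.Homotopic g := by
  constructor
  · rintro ⟨s, hs⟩
    exact ⟨{ toContinuousMap := s.uncurry.comp ContinuousMap.prodSwap
             map_zero_left := fun z => (hs z).1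
             map_one_left := fun z => (hs z).2 }⟩
  · rintro ⟨F⟩
    exact ⟨(F.toContinuousMap.comp ContinuousMap.prodSwap).curry,
      fun z => ⟨F.apply_zero z, F.apply_one z⟩⟩

theorem ContinuousMap.Homotopic.of_comp_left {Z X Y : Type*} [TopologicalSpace Z]
    [TopologicalSpace X] [TopologicalSpace Y] {i : C(X, Y)} {r : C(Y, X)}
    (hri : (r.comp i).Homotopic (ContinuousMap.id X)) {f g : C(Z, X)}
    (hfg : (i.comp f).Homotopic (i.comp g)) : f.Homotopic g :=
  ((hri.comp (.refl f)).symm.trans ((Homotopic.refl r).comp hfg)).trans (hri.comp (.refl g))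

theorem tcCover.of_homotopy_retract {X Y : Type*} [TopologicalSpace X] [TopologicalSpace Y]
    {i : C(X, Y)} {r : C(Y, X)} (hri : (r.comp i).Homotopic (ContinuousMap.id X)) {k : ℕ}
    (hY : tcCover Y k) : tcCover X k := by
  obtain ⟨V, hV_open, hV_cover, hV_section⟩ := hY
  refine ⟨fun j => i.prodMap i ⁻¹' V j, fun j => (hV_open j).preimage (i.prodMap i).continuous,
    by simp [← Set.preimage_iUnion, hV_cover], fun j => ?_⟩
  have hV := (ContinuousMap.exists_path_family_iff_homotopic
    (ContinuousMap.fst.restrict (V j)) (ContinuousMap.snd.restrict (V j))).1 (hV_section j)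
  refine (ContinuousMap.exists_path_family_iff_homotopic
    (ContinuousMap.fst.restrict _) (ContinuousMap.snd.restrict _)).2 (hri.of_comp_left ?_)
  exact hV.comp (.refl ((i.prodMap i).restrictPreimage (V j)))

theorem tc_le_of_homotopy_retract (X Y : Type*) [TopologicalSpace X] [TopologicalSpace Y]
    (i : C(X, Y)) (r : C(Y, X)) (h : (r.comp i).Homotopic (ContinuousMap.id X)) :
    topComplexity X ≤ topComplexity Y :=
  sInf_le_sInf fun _ ⟨k, hn, hk⟩ => ⟨k, hn, hk.of_homotopy_retract h⟩
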